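/- Let V_1, …, V_N be pairwise orthogonal linear subspaces of ℝ^n whose direct sum is ℝ^n, with orthogonal projections P_1, …, P_N (so ∑_i P_i = I). Let μ > 0 and for each i let B_i : ℝ^n → ℝ be differentiable and convex with B_i(u) = B_i(P_i u) for all u (each barrier term depends only on the component of u in V_i). Let θ' ∈ ℝ^n. Then the unique minimizer U of (1/2)‖u‖² − ⟨θ', u⟩ + μ∑_i B_i(u) over ℝ^n satisfies U = ∑_{i=1}^{N} u_i, where u_i is the unique minimizer of (1/2)‖u‖² − ⟨θ', u⟩ + μB_i(u) over the subspace V_i; moreover u_i = P_i U for each i. -/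

import Mathlib

open RealInnerProductSpace

/-!
Along the orthogonal decomposition `u = ∑ i, P i u` the objective splits into a sum of the
subproblem objectives evaluated at the components `P i u`: the quadratic term by Pythagoras, the
linear term by linearity, each barrier because it only sees its own component. Comparing `U` with
`∑ i, u i` therefore forces every subproblem objective at `P i U` to equal its minimum, and since
each subproblem objective is `1`-strongly convex its minimizer on `V i` is unique, so `P i U = u i`.
-/

section ProxObjective

variable {E : Type*} [NormedAddCommGroup E] [InnerProductSpace ℝ E]

/-- The objective `ψ(θ)` of the normalized program with barrier `g`. -/
noncomputable def proxObjective (θ : E) (μ : ℝ) (g : E → ℝ) (x : E) : ℝ :=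
  1 / 2 * ‖x‖ ^ 2 - ⟪θ, x⟫ + μ * g x

theorem strongConvexOn_proxObjective {s : Set E} (hs : Convex ℝ s) (θ : E) {μ : ℝ} (hμ : 0 ≤ μ)
    {g : E → ℝ} (hg : ConvexOn ℝ s g) : StrongConvexOn s 1 (proxObjective θ μ g) := by
  have hlin : ConvexOn ℝ s (-innerₛₗ ℝ θ) := (-innerₛₗ ℝ θ).convexOn hs
  refine strongConvexOn_iff_convex.2 ((hlin.add (hg.smul hμ)).congr fun x _ => ?_)
  simp only [proxObjective, Pi.add_apply, smul_eq_mul, LinearMap.neg_apply,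
    innerₛₗ_apply_apply]
  ring

theorem strictConvexOn_proxObjective {s : Set E} (hs : Convex ℝ s) (θ : E) {μ : ℝ} (hμ : 0 ≤ μ)
    {g : E → ℝ} (hg : ConvexOn ℝ s g) : StrictConvexOn ℝ s (proxObjective θ μ g) :=
  (strongConvexOn_proxObjective hs θ hμ hg).strictConvexOn one_pos

theorem eq_of_isMinOn_of_proxObjective_le {s : Set E} (hs : Convex ℝ s) {θ : E} {μ : ℝ}
    (hμ : 0 ≤ μ) {g : E → ℝ} (hg : ConvexOn ℝ s g) {a b : E} (ha : a ∈ s) (hb : b ∈ s)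
    (hmin : IsMinOn (proxObjective θ μ g) s a)
    (hle : proxObjective θ μ g b ≤ proxObjective θ μ g a) : a = b :=
  (strictConvexOn_proxObjective hs θ hμ hg).eq_of_isMinOn hmin
    (fun _ hx => hle.trans (hmin hx)) ha hb

end ProxObjective

namespace OrthogonalFamily

variable {E : Type*} [NormedAddCommGroup E] [InnerProductSpace ℝ E] {ι : Type*} [Fintype ι]
  {V : ι → Submodule ℝ E} {u : ι → E}

theorem norm_sum_sq_of_mem (hV : OrthogonalFamily ℝ (fun i => V i) fun i => (V i).subtypeₗᵢ)
    (hu : ∀ i, u i ∈ V i) : ‖∑ i, u i‖ ^ 2 = ∑ i, ‖u i‖ ^ 2 :=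
  hV.norm_sum (fun i => ⟨u i, hu i⟩) Finset.univ

variable [∀ i, (V i).HasOrthogonalProjection]

theorem orthogonalProjectionOnto_sum_of_mem
    (hV : OrthogonalFamily ℝ (fun i => V i) fun i => (V i).subtypeₗᵢ) (hu : ∀ i, u i ∈ V i)
    (i : ι) : ((V i).orthogonalProjectionOnto (∑ j, u j) : E) = u i := by
  rw [map_sum, Submodule.coe_sum, Finset.sum_eq_single i]
  · simp [Submodule.orthogonalProjectionOnto_mem_subspace_eq_self ⟨u i, hu i⟩]
  · intro j _ hji
    rw [(V i).orthogonalProjectionOnto_apply_of_mem_orthogonal ((hV.isOrtho hji).le (hu j)),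
      Submodule.coe_zero]
  · simp

theorem proxObjective_sum_of_mem
    (hV : OrthogonalFamily ℝ (fun i => V i) fun i => (V i).subtypeₗᵢ) (hu : ∀ i, u i ∈ V i)
    (θ : E) (μ : ℝ) {B : ι → E → ℝ}
    (hB : ∀ i x, B i x = B i ((V i).orthogonalProjectionOnto x)) :
    proxObjective θ μ (fun x => ∑ i, B i x) (∑ i, u i) =
      ∑ i, proxObjective θ μ (B i) (u i) := by
  have hBu : ∀ i, B i (∑ j, u j) = B i (u i) := fun i => by
    rw [hB, hV.orthogonalProjectionOnto_sum_of_mem hu]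
  simp only [proxObjective, hV.norm_sum_sq_of_mem hu, hBu]
  rw [_root_.inner_sum, Finset.mul_sum, Finset.mul_sum, ← Finset.sum_sub_distrib,
    ← Finset.sum_add_distrib]

end OrthogonalFamily

theorem barrierMPC_parallel_decomposition {n N : ℕ}
    (V : Fin N → Submodule ℝ (EuclideanSpace ℝ (Fin n)))
    (horth : ∀ i j, i ≠ j → ∀ x ∈ V i, ∀ y ∈ V j, ⟪x, y⟫ = (0 : ℝ))
    (hsum : ∀ w : EuclideanSpace ℝ (Fin n),
      ∑ i, (Submodule.orthogonalProjectionOnto (V i) w : EuclideanSpace ℝ (Fin n)) = w)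
    (μ : ℝ) (hμ : 0 < μ)
    (B : Fin N → EuclideanSpace ℝ (Fin n) → ℝ)
    (hBconv : ∀ i, ConvexOn ℝ Set.univ (B i))
    (hBdep : ∀ i u, B i u = B i (Submodule.orthogonalProjectionOnto (V i) u))
    (θ' U : EuclideanSpace ℝ (Fin n))
    (hUmin : ∀ w : EuclideanSpace ℝ (Fin n),
      (1 / 2) * ‖U‖ ^ 2 - ⟪θ', U⟫ + μ * ∑ i, B i U ≤
        (1 / 2) * ‖w‖ ^ 2 - ⟪θ', w⟫ + μ * ∑ i, B i w)
    (u : Fin N → EuclideanSpace ℝ (Fin n))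
    (hu : ∀ i, u i ∈ V i)
    (humin : ∀ i, ∀ v ∈ V i,
      (1 / 2) * ‖u i‖ ^ 2 - ⟪θ', u i⟫ + μ * B i (u i) ≤
        (1 / 2) * ‖v‖ ^ 2 - ⟪θ', v⟫ + μ * B i v) :
    U = ∑ i, u i ∧
      ∀ i, u i = (Submodule.orthogonalProjectionOnto (V i) U : EuclideanSpace ℝ (Fin n)) := by
  have hV : OrthogonalFamily ℝ (fun i => V i) fun i => (V i).subtypeₗᵢ :=
    .of_pairwise fun i j hij => Submodule.isOrtho_iff_inner_eq.2 (horth i j hij)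
  set p := fun i => ((V i).orthogonalProjectionOnto U : EuclideanSpace ℝ (Fin n))
  have hp : ∀ i, p i ∈ V i := fun i => ((V i).orthogonalProjectionOnto U).2
  have hpU : ∑ i, p i = U := hsum U
  have hle : ∀ i ∈ Finset.univ, proxObjective θ' μ (B i) (u i) ≤ proxObjective θ' μ (B i) (p i) :=
    fun i _ => humin i (p i) (hp i)
  have hge : ∑ i, proxObjective θ' μ (B i) (p i) ≤ ∑ i, proxObjective θ' μ (B i) (u i) := by
    rw [← hV.proxObjective_sum_of_mem hp θ' μ hBdep, ← hV.proxObjective_sum_of_mem hu θ' μ hBdep,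
      hpU]
    exact hUmin _
  have hterm := (Finset.sum_eq_sum_iff_of_le hle).1 (le_antisymm (Finset.sum_le_sum hle) hge)
  have hup : ∀ i, u i = p i := fun i =>
    eq_of_isMinOn_of_proxObjective_le (V i).convex hμ.le ((hBconv i).subset (Set.subset_univ _)
      (V i).convex) (hu i) (hp i) (humin i) (hterm i (Finset.mem_univ i)).symm.le
  exact ⟨hpU.symm.trans (Finset.sum_congr rfl fun i _ => (hup i).symm), hup⟩
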